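/- arXiv:2205.02868 — 2 statements merged into one kernel-verified Lean document; each statement's English description precedes it below -/
import Mathlib

section
/- Let (X,d) be a complete metric space, let f : X → (−∞,∞] be lower semicontinuous, and let x̄ be a point with f(x̄) finite at which the slope is zero: |∇f|(x̄) = 0. Let M be an identifiable set for f at x̄. Then x̄ is a local minimizer of f if and only if x̄ is a local minimizer of f restricted to M (that is, f(x) ≥ f(x̄) for all x ∈ M near x̄). -/
open Filter Topology
open scoped ENNReal NNReal

/-- The slope `|∇f|(x)`: the infimum of all `δ > 0` such that `x` is a local minimizer of
`f + δ·d(·,x)`; it equals `∞` at points where `f x = ⊤`. -/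
noncomputable def slopeM {X : Type*} [MetricSpace X] (f : X → EReal) (x : X) : ℝ≥0∞ :=
  if f x = ⊤ then ⊤
  else sInf {δ : ℝ≥0∞ | ∃ c : ℝ, 0 < c ∧ δ = ENNReal.ofReal c ∧
    ∀ᶠ z in 𝓝 x, f x ≤ f z + ((c * dist z x : ℝ) : EReal)}

/-- The modulus of identifiability: `liminf_{x → xbar, x ∉ M, f(x) → f(xbar)} |∇f|(x)`. -/
noncomputable def identModulus {X : Type*} [MetricSpace X] (f : X → EReal) (M : Set X)
    (xbar : X) : ℝ≥0∞ :=
  Filter.liminf (slopeM f) (𝓝[Mᶜ] xbar ⊓ Filter.comap f (𝓝 (f xbar)))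

/-- `M` is an identifiable set for `f` at `xbar`: it is closed, contains `xbar`, and the
modulus of identifiability is strictly positive. -/
def Identifiable {X : Type*} [MetricSpace X] (f : X → EReal) (M : Set X) (xbar : X) : Prop :=
  IsClosed M ∧ xbar ∈ M ∧ 0 < identModulus f M xbar

/-!
If `x̄` is not a local minimizer, pick `z` close to `x̄` with `f z < f x̄` and apply Ekeland's
variational principle, with a constant `c` below the modulus of identifiability, to `f`
restricted to a small closed ball (where the zero slope at `x̄` bounds `f` below). The resulting
point `v` has slope at most `c`, lies close to `x̄` with `f v` close to `f x̄`, and satisfies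
`f v ≤ f z < f x̄`, so it is not in `M` when `x̄` minimizes `f` on `M` locally. Letting `z → x̄`
contradicts the positivity of the modulus.
-/

open Metric

lemma LowerSemicontinuous.ite_top {α γ : Type*} [TopologicalSpace α] [LinearOrder γ] [OrderTop γ]
    {f : α → γ} {s : Set α} [DecidablePred (· ∈ s)] (hf : LowerSemicontinuous f)
    (hs : IsClosed s) : LowerSemicontinuous fun x => if x ∈ s then f x else ⊤ := by
  refine lowerSemicontinuous_iff_isClosed_preimage.2 fun y => ?_
  rcases eq_or_ne y ⊤ with rfl | hy
  · simp
  · convert hs.inter (hf.isClosed_preimage y) using 1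
    ext x
    by_cases hx : x ∈ s <;> simp [hx, hy]

lemma EReal.tendsto_of_le_add_of_le {ι : Type*} {l : Filter ι} {u : ι → EReal} {ε : ι → ℝ}
    {r : ℝ} (hε : Tendsto ε l (𝓝 0)) (hlow : ∀ i, (r : EReal) ≤ u i + ε i)
    (hup : ∀ i, u i ≤ r) : Tendsto u l (𝓝 r) := by
  refine tendsto_of_tendsto_of_tendsto_of_le_of_le (g := fun i => ((r - ε i : ℝ) : EReal))
    ?_ tendsto_const_nhds (fun i => ?_) hup
  · simpa using EReal.tendsto_coe.2 (tendsto_const_nhds.sub hε)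
  · simpa only [EReal.coe_sub] using EReal.sub_le_of_le_add (hlow i)

lemma exists_forall_lt_add {α : Type*} {g : α → EReal} {s : Set α} {b : ℝ}
    (hgb : ∀ y ∈ s, (b : EReal) ≤ g y) {x : α} (hx : x ∈ s) (hgx : g x ≠ ⊤) {ε : ℝ}
    (hε : 0 < ε) : ∃ u ∈ s, ∀ w ∈ s, g u < g w + ε := by
  have hinf_top : sInf (g '' s) ≠ ⊤ :=
    ne_top_of_le_ne_top hgx (sInf_le (Set.mem_image_of_mem g hx))
  have hinf_bot : sInf (g '' s) ≠ ⊥ :=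
    ne_bot_of_le_ne_bot (EReal.coe_ne_bot b) (le_sInf (Set.forall_mem_image.2 hgb))
  have hlt : sInf (g '' s) < sInf (g '' s) + ε := by
    rw [← EReal.coe_toReal hinf_top hinf_bot, ← EReal.coe_add]
    exact_mod_cast lt_add_of_pos_right _ hε
  obtain ⟨_, ⟨u, hu, rfl⟩, hlt⟩ := sInf_lt_iff.1 hlt
  exact ⟨u, hu, fun w hw => hlt.trans_le (by gcongr; exact sInf_le (Set.mem_image_of_mem g hw))⟩

section Ekeland

variable {X : Type*} [MetricSpace X] {g : X → EReal} {lam : ℝ}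

def ekelandSet (g : X → EReal) (lam : ℝ) (v : X) : Set X :=
  {w | g w + ((lam * dist w v : ℝ) : EReal) ≤ g v}

lemma self_mem_ekelandSet (v : X) : v ∈ ekelandSet g lam v := by
  simp [ekelandSet]

lemma le_of_mem_ekelandSet (hlam : 0 ≤ lam) {v w : X} (hw : w ∈ ekelandSet g lam v) :
    g w ≤ g v :=
  (le_add_of_nonneg_right (EReal.coe_nonneg.2 (by positivity))).trans hw

lemma ekelandSet_subset (hlam : 0 ≤ lam) {u v : X} (hu : u ∈ ekelandSet g lam v) :
    ekelandSet g lam u ⊆ ekelandSet g lam v := fun w hw =>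
  calc g w + ((lam * dist w v : ℝ) : EReal)
      ≤ g w + ((lam * dist w u : ℝ) : EReal) + ((lam * dist u v : ℝ) : EReal) := by
        rw [add_assoc, ← EReal.coe_add, ← mul_add]
        gcongr
        exact dist_triangle w u v
    _ ≤ g u + ((lam * dist u v : ℝ) : EReal) := by gcongr; exact hw
    _ ≤ g v := hu

lemma isClosed_ekelandSet (hg : LowerSemicontinuous g) (v : X) :
    IsClosed (ekelandSet g lam v) := by
  have hpen : Continuous fun w => ((lam * dist w v : ℝ) : EReal) :=
    EReal.continuous_coe_iff.2 (by fun_prop)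
  have hsum : LowerSemicontinuous fun w => g w + ((lam * dist w v : ℝ) : EReal) :=
    hg.add' hpen.lowerSemicontinuous fun w =>
      EReal.continuousAt_add (.inr (EReal.coe_ne_bot _)) (.inr (EReal.coe_ne_top _))
  exact hsum.isClosed_preimage (g v)

lemma dist_lt_of_mem_ekelandSet (hlam : 0 < lam) {u v w : X} {ε : ℝ}
    (hu : u ∈ ekelandSet g lam v)
    (hmin : ∀ y ∈ ekelandSet g lam v, g u < g y + ((lam * ε : ℝ) : EReal))
    (hw : w ∈ ekelandSet g lam u) : dist w u < ε := by
  have : g w + ((lam * dist w u : ℝ) : EReal) < g w + ((lam * ε : ℝ) : EReal) :=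
    hw.trans_lt (hmin w (ekelandSet_subset hlam.le hu hw))
  exact (mul_lt_mul_iff_right₀ hlam).1 (EReal.coe_lt_coe_iff.1 (lt_of_add_lt_add_left this))

theorem ekeland_variational_principle [CompleteSpace X] (hg : LowerSemicontinuous g) {b : ℝ}
    (hgb : ∀ y, (b : EReal) ≤ g y) (hlam : 0 < lam) {x₀ : X} (hx₀ : g x₀ ≠ ⊤) :
    ∃ x ∈ ekelandSet g lam x₀, ∀ w, g x ≤ g w + ((lam * dist w x : ℝ) : EReal) := by
  -- Step `n` moves to a `λ 2⁻ⁿ`-near minimizer of `g` on the current set; the nested sets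
  -- then shrink to the point `x`.
  have step : ∀ (n : ℕ) (v : X), g v ≠ ⊤ → ∃ u ∈ ekelandSet g lam v,
      ∀ w ∈ ekelandSet g lam v, g u < g w + ((lam * (1 / 2) ^ n : ℝ) : EReal) :=
    fun n v hv => exists_forall_lt_add (fun y _ => hgb y) (self_mem_ekelandSet v) hv
      (by positivity)
  choose! next hnext_mem hnext_lt using step
  obtain ⟨v, hv_zero, hv_succ⟩ : ∃ v : ℕ → X, v 0 = x₀ ∧ ∀ n, v (n + 1) = next n (v n) :=
    ⟨fun n => Nat.rec x₀ next n, rfl, fun _ => rfl⟩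
  have hv_top : ∀ n, g (v n) ≠ ⊤ := by
    intro n
    induction n with
    | zero => rwa [hv_zero]
    | succ n ih =>
      rw [hv_succ]
      exact ne_top_of_le_ne_top ih (le_of_mem_ekelandSet hlam.le (hnext_mem n _ ih))
  have hv_mem : ∀ n, v (n + 1) ∈ ekelandSet g lam (v n) := fun n => by
    rw [hv_succ]
    exact hnext_mem n _ (hv_top n)
  have hanti : Antitone fun n => ekelandSet g lam (v n) :=
    antitone_nat_of_succ_le fun n => ekelandSet_subset hlam.le (hv_mem n)
  have hsmall : ∀ n, ∀ w ∈ ekelandSet g lam (v (n + 1)), dist w (v (n + 1)) < (1 / 2) ^ n :=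
    fun n w hw => dist_lt_of_mem_ekelandSet hlam (hv_mem n)
      (by rw [hv_succ]; exact hnext_lt n _ (hv_top n)) hw
  have hmem : ∀ {m n}, m ≤ n → v n ∈ ekelandSet g lam (v m) :=
    fun hmn => hanti hmn (self_mem_ekelandSet _)
  have hgeom : Tendsto (fun n : ℕ => (1 / 2 : ℝ) ^ n) atTop (𝓝 0) :=
    tendsto_pow_atTop_nhds_zero_of_lt_one (by norm_num) (by norm_num)
  have hcauchy : CauchySeq fun n => v (n + 1) := by
    refine cauchySeq_of_le_tendsto_0 (fun N => 2 * (1 / 2 : ℝ) ^ N) (fun m k N hm hk => ?_)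
      (by simpa using hgeom.const_mul 2)
    have hm' := hsmall N _ (hmem (by omega : N + 1 ≤ m + 1))
    have hk' := hsmall N _ (hmem (by omega : N + 1 ≤ k + 1))
    linarith [dist_triangle_right (v (m + 1)) (v (k + 1)) (v (N + 1))]
  obtain ⟨x, hx⟩ := cauchySeq_tendsto_of_complete hcauchy
  have hx_mem : ∀ n, x ∈ ekelandSet g lam (v n) := fun n =>
    (isClosed_ekelandSet hg _).mem_of_tendsto hx
      (eventually_atTop.2 ⟨n, fun _ hm => hmem (Nat.le_succ_of_le hm)⟩)
  have hx_unique : ∀ w ∈ ekelandSet g lam x, w = x := by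
    intro w hw
    refine tendsto_nhds_unique (tendsto_iff_dist_tendsto_zero.2 ?_) hx
    refine squeeze_zero (fun _ => dist_nonneg) (fun n => ?_) hgeom
    rw [dist_comm]
    exact (hsmall n w (ekelandSet_subset hlam.le (hx_mem _) hw)).le
  refine ⟨x, hv_zero ▸ hx_mem 0, fun w => le_of_not_gt fun hlt => ?_⟩
  obtain rfl := hx_unique w hlt.le
  simp at hlt

end Ekeland

section Slope

variable {X : Type*} [MetricSpace X] {f : X → EReal} {x : X} {c : ℝ}

lemma eventually_le_add_dist_of_slopeM_lt (hx : f x ≠ ⊤) (h : slopeM f x < ENNReal.ofReal c) :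
    ∀ᶠ z in 𝓝 x, f x ≤ f z + ((c * dist z x : ℝ) : EReal) := by
  rw [slopeM, if_neg hx] at h
  obtain ⟨_, ⟨c', -, rfl, hev⟩, hlt⟩ := sInf_lt_iff.1 h
  have hc' : c' < c := (ENNReal.ofReal_lt_ofReal_iff'.1 hlt).1
  filter_upwards [hev] with z hz
  exact hz.trans (by gcongr)

lemma slopeM_le_of_eventually_le_add_dist (hx : f x ≠ ⊤) (hc : 0 < c)
    (h : ∀ᶠ z in 𝓝 x, f x ≤ f z + ((c * dist z x : ℝ) : EReal)) :
    slopeM f x ≤ ENNReal.ofReal c := by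
  rw [slopeM, if_neg hx]
  exact sInf_le ⟨c, hc, rfl, h⟩

lemma identModulus_le_of_tendsto {M : Set X} {v : ℕ → X} {a : ℝ≥0∞}
    (hv : Tendsto v atTop (𝓝 x)) (hvM : ∀ n, v n ∉ M) (hfv : Tendsto (f ∘ v) atTop (𝓝 (f x)))
    (ha : ∀ n, slopeM f (v n) ≤ a) : identModulus f M x ≤ a := by
  have hL : Tendsto v atTop (𝓝[Mᶜ] x ⊓ comap f (𝓝 (f x))) :=
    tendsto_inf.2 ⟨tendsto_nhdsWithin_iff.2 ⟨hv, .of_forall hvM⟩, tendsto_comap_iff.2 hfv⟩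
  exact liminf_le_of_frequently_le' (hL.frequently (.of_forall ha))

lemma exists_slopeM_le_of_lt [CompleteSpace X] (hf : LowerSemicontinuous f) {xbar z : X}
    {R : ℝ} (hbot : f xbar ≠ ⊥) (hfin : f xbar ≠ ⊤) (hc : 0 < c)
    (hR : ∀ y ∈ closedBall xbar R, f xbar ≤ f y + ((c / 2 * dist y xbar : ℝ) : EReal))
    (hz : 2 * dist z xbar < R) (hfz : f z < f xbar) :
    ∃ v, dist v xbar < 2 * dist z xbar ∧ f v ≤ f z ∧
      f xbar ≤ f v + ((c * dist z xbar : ℝ) : EReal) ∧ slopeM f v ≤ ENNReal.ofReal c := by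
  classical
  obtain ⟨r, hr⟩ : ∃ r : ℝ, f xbar = r := ⟨_, (EReal.coe_toReal hfin hbot).symm⟩
  have hzB : z ∈ closedBall xbar R :=
    mem_closedBall.2 (by linarith [dist_nonneg (x := z) (y := xbar)])
  obtain ⟨g, hg, hg_in, hg_out⟩ : ∃ g : X → EReal, LowerSemicontinuous g ∧
      (∀ y ∈ closedBall xbar R, g y = f y) ∧ ∀ y ∉ closedBall xbar R, g y = ⊤ :=
    ⟨_, hf.ite_top isClosed_closedBall, fun y hy => if_pos hy, fun y hy => if_neg hy⟩
  have hgb : ∀ y, ((r - c / 2 * R : ℝ) : EReal) ≤ g y := by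
    intro y
    by_cases hy : y ∈ closedBall xbar R
    · rw [hg_in y hy, EReal.coe_sub, EReal.sub_le_iff_le_add (.inl (EReal.coe_ne_bot _))
        (.inl (EReal.coe_ne_top _)), ← hr]
      exact (hR y hy).trans (by gcongr; exact mem_closedBall.1 hy)
    · simp [hg_out y hy]
  have hgz : g z = f z := hg_in z hzB
  obtain ⟨v, hvz, hvmin⟩ := ekeland_variational_principle hg hgb hc (hgz ▸ hfz.ne_top)
  have hvB : v ∈ closedBall xbar R := by
    by_contra hv
    exact hfz.ne_top (top_le_iff.1 (hg_out v hv ▸ hgz ▸ le_of_mem_ekelandSet hc.le hvz))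
  have hfvz : f v ≤ f z := hg_in v hvB ▸ hgz ▸ le_of_mem_ekelandSet hc.le hvz
  -- Ekeland's inequality at `z` against the zero-slope bound at `xbar` keeps `v` near `z`.
  have hdvz : dist v z < dist z xbar := by
    have : f v + ((c * dist v z : ℝ) : EReal) <
        f v + ((c / 2 * (dist v z + dist z xbar) : ℝ) : EReal) :=
      calc f v + ((c * dist v z : ℝ) : EReal) ≤ f z := by rw [← hg_in v hvB, ← hgz]; exact hvz
        _ < f xbar := hfz
        _ ≤ f v + ((c / 2 * dist v xbar : ℝ) : EReal) := hR v hvB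
        _ ≤ _ := by gcongr; exact dist_triangle v z xbar
    have := EReal.coe_lt_coe_iff.1 (lt_of_add_lt_add_left this)
    nlinarith
  have hdvx : dist v xbar < 2 * dist z xbar := by linarith [dist_triangle v z xbar]
  refine ⟨v, hdvx, hfvz, (hR v hvB).trans (add_le_add le_rfl (EReal.coe_le_coe_iff.2 ?_)), ?_⟩
  · nlinarith
  refine slopeM_le_of_eventually_le_add_dist (ne_top_of_le_ne_top hfz.ne_top hfvz) hc ?_
  filter_upwards [isOpen_ball.mem_nhds (mem_ball.2 (hdvx.trans hz))] with w hw
  simpa only [hg_in v hvB, hg_in w (ball_subset_closedBall hw)] using hvmin w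

end Slope

/-- Sufficient condition for optimality: local minimality is equivalent to
local minimality relative to an identifiable set. -/
theorem localMin_iff_localMin_on_identifiable {X : Type*} [MetricSpace X] [CompleteSpace X]
    (f : X → EReal) (hlsc : LowerSemicontinuous f) (hbot : ∀ z, f z ≠ ⊥)
    (xbar : X) (hfin : f xbar ≠ ⊤) (hslope : slopeM f xbar = 0)
    (M : Set X) (hM : Identifiable f M xbar) :
    (∀ᶠ z in 𝓝 xbar, f xbar ≤ f z) ↔ (∀ᶠ z in 𝓝[M] xbar, f xbar ≤ f z) := by
  refine ⟨fun h => h.filter_mono nhdsWithin_le_nhds, fun hmin => ?_⟩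
  obtain ⟨c, -, hc, hcM⟩ := ENNReal.lt_iff_exists_real_btwn.1 hM.2.2
  replace hc : 0 < c := ENNReal.ofReal_pos.1 hc
  obtain ⟨R, hR, hball⟩ := nhds_basis_closedBall.eventually_iff.1 <|
    (eventually_le_add_dist_of_slopeM_lt hfin (hslope ▸ ENNReal.ofReal_pos.2 (half_pos hc))).and
      (eventually_nhdsWithin_iff.1 hmin)
  by_contra hnot
  obtain ⟨z, hz_lim, hz⟩ := exists_seq_forall_of_frequently
    ((not_eventually.1 hnot).and_eventually (ball_mem_nhds xbar (half_pos hR)))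
  choose v hv_dist hv_le hv_ge hv_slope using fun n =>
    exists_slopeM_le_of_lt hlsc (hbot xbar) hfin hc (fun y hy => (hball hy).1)
      (by linarith [mem_ball.1 (hz n).2]) (not_le.1 (hz n).1)
  have hdz : Tendsto (fun n => dist (z n) xbar) atTop (𝓝 0) :=
    tendsto_iff_dist_tendsto_zero.1 hz_lim
  have hv_lim : Tendsto v atTop (𝓝 xbar) :=
    tendsto_iff_dist_tendsto_zero.2 <| squeeze_zero (fun _ => dist_nonneg)
      (fun n => (hv_dist n).le) (by simpa using hdz.const_mul 2)
  have hv_notMem : ∀ n, v n ∉ M := fun n hvM =>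
    (hz n).1 ((hball (mem_closedBall.2 (by linarith [hv_dist n, mem_ball.1 (hz n).2]))).2 hvM
      |>.trans (hv_le n))
  obtain ⟨r, hr⟩ : ∃ r : ℝ, f xbar = r := ⟨_, (EReal.coe_toReal hfin (hbot xbar)).symm⟩
  have hfv : Tendsto (f ∘ v) atTop (𝓝 (f xbar)) := by
    rw [hr] at hv_ge hz ⊢
    exact EReal.tendsto_of_le_add_of_le (by simpa using hdz.const_mul c) hv_ge
      fun n => (hv_le n).trans (not_le.1 (hz n).1).le
  exact (hcM.trans_le (identModulus_le_of_tendsto hv_lim hv_notMem hfv hv_slope)).false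
end

section
/- Let (X,d) be a complete metric space, let f : X → (−∞,∞] be lower semicontinuous, and let x̄ be a point with f(x̄) finite at which the slope is zero: |∇f|(x̄) = 0. Let M be an identifiable set for f at x̄. Then x̄ is a strict local minimizer of f (meaning f(x) > f(x̄) for all x ≠ x̄ near x̄) if and only if x̄ is a strict local minimizer of f restricted to M (meaning f(x) > f(x̄) for all x ∈ M with x ≠ x̄ near x̄). -/
open Filter Topology
open scoped ENNReal NNReal

/-!
Suppose `xbar` is not a strict local minimizer: there are `z ≠ xbar` arbitrarily close to `xbar`
with `f z ≤ f xbar`. Because `|∇f|(xbar) = 0`, such a `z` is almost minimal on a closed ball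
around `xbar` of radius `2 d(z, xbar)`, so Ekeland's variational principle (applied on the
closed sublevel set `{f ≤ f z}` of that ball) moves it to a point `y ≠ xbar`, still with
`f y ≤ f xbar`, whose slope is at most any prescribed `a > 0`. Lower semicontinuity together
with `f y ≤ f xbar` forces `f y → f xbar`, so for `a` below the modulus of identifiability `y`
must lie in `M`, where `f y ≤ f xbar` contradicts strict minimality of `xbar` on `M`.
-/

open Set Metric

theorem LowerSemicontinuous.of_strictMono_comp {α β γ : Type*} [TopologicalSpace α]
    [LinearOrder β] [LinearOrder γ] {g : α → β} {φ : β → γ} (hφ : StrictMono φ)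
    (h : LowerSemicontinuous (φ ∘ g)) : LowerSemicontinuous g := fun x v hv =>
  (h x (φ v) (hφ hv)).mono fun _ => hφ.lt_iff_lt.1

theorem LowerSemicontinuous.tendsto_nhdsWithin_sublevel {α β : Type*} [TopologicalSpace α]
    [LinearOrder β] [TopologicalSpace β] [OrderTopology β] {f : α → β}
    (hf : LowerSemicontinuous f) (x : α) : Tendsto f (𝓝[{y | f y ≤ f x}] x) (𝓝 (f x)) :=
  tendsto_order.2 ⟨fun _ hl => (hf x _ hl).filter_mono nhdsWithin_le_nhds,
    fun _ hu => eventually_nhdsWithin_of_forall fun _ hy => lt_of_le_of_lt hy hu⟩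

/-- **Ekeland's variational principle.** -/
theorem LowerSemicontinuous.exists_forall_le_add_mul_dist {Y : Type*} [MetricSpace Y]
    [CompleteSpace Y] {g : Y → ℝ} (hg : LowerSemicontinuous g) {z : Y} {ε σ : ℝ}
    (hσ : 0 < σ) (hz : ∀ x, g z ≤ g x + ε) :
    ∃ y, g y ≤ g z ∧ σ * dist y z ≤ ε ∧ ∀ x, g y ≤ g x + σ * dist x y := by
  set S : Y → Set Y := fun w => {u | g u + σ * dist u w ≤ g w} with hS
  have mem_self (w : Y) : w ∈ S w := by simp [hS]
  have mem_trans {u v w : Y} (huv : u ∈ S v) (hvw : v ∈ S w) : u ∈ S w := by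
    simp only [hS, mem_ofPred_eq] at *
    nlinarith [dist_triangle u v w]
  have isClosed_S (w : Y) : IsClosed (S w) :=
    (hg.add (continuous_const.mul (continuous_id.dist continuous_const)).lowerSemicontinuous)
      |>.isClosed_preimage (g w)
  have almost_min (n : ℕ) (w : Y) : ∃ u ∈ S w, ∀ v ∈ S w, g u ≤ g v + (1 / 2) ^ n := by
    obtain ⟨_, ⟨u, hu, rfl⟩, hlt⟩ :=
      Real.lt_sInf_add_pos (s := g '' S w) ⟨g w, w, mem_self w, rfl⟩ (pow_pos one_half_pos n)
    have hbdd : BddBelow (g '' S w) := ⟨g z - ε, by rintro _ ⟨x, -, rfl⟩; linarith [hz x]⟩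
    exact ⟨u, hu, fun v hv => by linarith [csInf_le hbdd (mem_image_of_mem g hv)]⟩
  -- Each `y (n + 1)` is `2⁻ⁿ`-almost minimal on `S (y n)`, so the nested sets `S (y n)` shrink
  -- to their common point `w`, which nothing in `S w` can improve on.
  choose next next_mem next_le using almost_min
  let y : ℕ → Y := fun n => Nat.rec z (fun n w => next n w) n
  have hanti : Antitone fun n => S (y n) :=
    antitone_nat_of_succ_le fun n _ hu => mem_trans hu (next_mem n (y n))
  have hnear (n : ℕ) : ∀ u ∈ S (y (n + 1)), g (y (n + 1)) ≤ g u + (1 / 2) ^ n :=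
    fun u hu => next_le n (y n) u (hanti n.le_succ hu)
  have hsmall (n : ℕ) : ∀ u ∈ S (y (n + 1)), σ * dist u (y (n + 1)) ≤ (1 / 2) ^ n :=
    fun u hu => by linarith [hnear n u hu, show g u + _ ≤ _ from hu]
  have hcauchy : CauchySeq y := by
    refine Metric.cauchySeq_iff'.2 fun δ hδ => ?_
    obtain ⟨n, hn⟩ := exists_pow_lt_of_lt_one (mul_pos hσ hδ) one_half_lt_one
    refine ⟨n + 1, fun m hm => lt_of_mul_lt_mul_left ?_ hσ.le⟩
    exact (hsmall n _ (hanti hm (mem_self _))).trans_lt hn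
  obtain ⟨w, hw⟩ := cauchySeq_tendsto_of_complete hcauchy
  have hwS (n : ℕ) : w ∈ S (y n) :=
    (isClosed_S _).mem_of_tendsto hw (eventually_atTop.2 ⟨n, fun m hm => hanti hm (mem_self _)⟩)
  have hw0 : g w + σ * dist w z ≤ g z := hwS 0
  have hσd : 0 ≤ σ * dist w z := mul_nonneg hσ.le dist_nonneg
  refine ⟨w, by linarith, by linarith [hz w], fun x => ?_⟩
  by_contra! hx
  have hxS (n : ℕ) : x ∈ S (y n) := mem_trans hx.le (hwS n)
  have hwx : g w ≤ g x := le_of_forall_pos_le_add fun δ hδ => by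
    obtain ⟨n, hn⟩ := exists_pow_lt_of_lt_one hδ one_half_lt_one
    have hw' : g w + σ * dist w (y (n + 1)) ≤ g (y (n + 1)) := hwS (n + 1)
    nlinarith [hnear n x (hxS (n + 1)), mul_nonneg hσ.le (dist_nonneg (x := w) (y := y (n + 1)))]
  nlinarith [mul_nonneg hσ.le (dist_nonneg (x := x) (y := w))]

section Slope

variable {X : Type*} [MetricSpace X] {f : X → EReal} {x : X}

theorem eventually_le_add_mul_dist_of_slopeM_lt {c : ℝ} (h : slopeM f x < ENNReal.ofReal c) :
    ∀ᶠ z in 𝓝 x, f x ≤ f z + ((c * dist z x : ℝ) : EReal) := by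
  have hx : f x ≠ ⊤ := fun hx => by simp [slopeM, hx] at h
  rw [slopeM, if_neg hx, sInf_lt_iff] at h
  obtain ⟨_, ⟨b, hb, rfl, hev⟩, hbc⟩ := h
  have hbc : b ≤ c := ((ENNReal.ofReal_lt_ofReal_iff_of_nonneg hb.le).1 hbc).le
  filter_upwards [hev] with z hz
  exact hz.trans (by gcongr)

theorem slopeM_le_ofReal {c : ℝ} (hc : 0 < c) (hx : f x ≠ ⊤)
    (h : ∀ᶠ z in 𝓝 x, f x ≤ f z + ((c * dist z x : ℝ) : EReal)) :
    slopeM f x ≤ ENNReal.ofReal c := by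
  rw [slopeM, if_neg hx]
  exact sInf_le ⟨c, hc, rfl, h⟩

theorem Identifiable.exists_eventually_ofReal_lt_slopeM {M : Set X} (hM : Identifiable f M x)
    (hf : LowerSemicontinuous f) :
    ∃ a > 0, ∀ᶠ y in 𝓝 x, y ∉ M → f y ≤ f x → ENNReal.ofReal a < slopeM f y := by
  obtain ⟨a, -, ha0, ha⟩ := ENNReal.lt_iff_exists_real_btwn.1 hM.2.2
  refine ⟨a, ENNReal.ofReal_pos.1 ha0, ?_⟩
  have hle : 𝓝[Mᶜ ∩ {y | f y ≤ f x}] x ≤ 𝓝[Mᶜ] x ⊓ comap f (𝓝 (f x)) :=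
    le_inf (nhdsWithin_mono _ inter_subset_left)
      ((hf.tendsto_nhdsWithin_sublevel x).mono_left
        (nhdsWithin_mono _ inter_subset_right)).le_comap
  filter_upwards [eventually_nhdsWithin_iff.1 ((eventually_lt_of_lt_liminf ha).filter_mono hle)]
    with y hy hyM hyf using hy ⟨hyM, hyf⟩

theorem LowerSemicontinuous.exists_mem_forall_le_add_mul_dist [CompleteSpace X]
    (hf : LowerSemicontinuous f) {K : Set X} (hK : IsClosed K) {z : X} (hzK : z ∈ K)
    (hz_top : f z ≠ ⊤) (hz_bot : f z ≠ ⊥) {ε σ : ℝ} (hσ : 0 < σ)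
    (hz : ∀ u ∈ K, f z ≤ f u + ε) :
    ∃ y ∈ K, f y ≤ f z ∧ σ * dist y z ≤ ε ∧
      ∀ u ∈ K, f y ≤ f u + ((σ * dist u y : ℝ) : EReal) := by
  set T := K ∩ {u | f u ≤ f z}
  have : CompleteSpace T := (hK.inter (hf.isClosed_preimage (f z))).completeSpace_coe
  have hreal (u : T) : ((f u).toReal : EReal) = f u := by
    refine EReal.coe_toReal (u.2.2.trans_lt hz_top.lt_top).ne fun hbot => hz_bot ?_
    simpa [hbot] using hz u u.2.1
  set g : T → ℝ := fun u => (f u).toReal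
  have hg : LowerSemicontinuous g := by
    refine LowerSemicontinuous.of_strictMono_comp EReal.coe_strictMono ?_
    simpa only [Function.comp_def, g, hreal] using hf.comp continuous_subtype_val
  obtain ⟨y, hyz, hyd, hymin⟩ :=
    hg.exists_forall_le_add_mul_dist (z := ⟨z, hzK, le_refl (f z)⟩) hσ fun u =>
      EReal.coe_le_coe_iff.1 <| by
        simpa only [EReal.coe_add, g, hreal, EReal.coe_toReal hz_top hz_bot] using hz u u.2.1
  refine ⟨y, y.2.1, y.2.2, hyd, fun u hu => ?_⟩
  by_cases huz : f u ≤ f z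
  · have hu_real : ((f u).toReal : EReal) = f u := hreal ⟨u, hu, huz⟩
    simpa only [EReal.coe_add, g, hreal, hu_real, Subtype.dist_eq]
      using EReal.coe_le_coe_iff.2 (hymin ⟨u, hu, huz⟩)
  · exact y.2.2.trans ((not_le.1 huz).le.trans
      (le_add_of_nonneg_right (EReal.coe_nonneg.2 (by positivity))))

theorem frequently_le_and_slopeM_le_of_frequently_le [CompleteSpace X]
    (hf : LowerSemicontinuous f) (hbot : ∀ z, f z ≠ ⊥) (hx : f x ≠ ⊤) {a : ℝ}
    (hslope : slopeM f x < ENNReal.ofReal (a / 2)) (h : ∃ᶠ z in 𝓝[≠] x, f z ≤ f x) :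
    ∃ᶠ y in 𝓝[≠] x, f y ≤ f x ∧ slopeM f y ≤ ENNReal.ofReal a := by
  have ha : 0 < a := by linarith [ENNReal.ofReal_pos.1 (bot_le.trans_lt hslope)]
  obtain ⟨c, hc0, hc, hca⟩ := ENNReal.lt_iff_exists_real_btwn.1 hslope
  replace hca : c < a / 2 := (ENNReal.ofReal_lt_ofReal_iff_of_nonneg hc0).1 hca
  obtain ⟨ρ₀, hρ₀, hlow⟩ :=
    Metric.eventually_nhds_iff.1 (eventually_le_add_mul_dist_of_slopeM_lt hc)
  rw [nhdsWithin_basis_ball.frequently_iff] at h ⊢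
  intro ρ hρ
  obtain ⟨z, ⟨hzρ, hzx⟩, hzf⟩ := h (min ρ ρ₀ / 2) (by positivity)
  set d := dist z x
  have hd : 0 < d := dist_pos.2 hzx
  have hdρ : 2 * d < ρ ∧ 2 * d < ρ₀ := by
    have := mem_ball.1 hzρ
    constructor <;> linarith [min_le_left ρ ρ₀, min_le_right ρ ρ₀]
  have hlow' (u : X) (hu : u ∈ closedBall x (2 * d)) :
      f z ≤ f u + ((c * (2 * d) : ℝ) : EReal) :=
    calc f z ≤ f x := hzf
      _ ≤ f u + ((c * dist u x : ℝ) : EReal) := hlow ((mem_closedBall.1 hu).trans_lt hdρ.2)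
      _ ≤ _ := by gcongr; exact mem_closedBall.1 hu
  obtain ⟨y, -, hyz, hyd, hymin⟩ := hf.exists_mem_forall_le_add_mul_dist isClosed_closedBall
    (mem_closedBall.2 (by linarith)) (hzf.trans_lt hx.lt_top).ne (hbot z) ha hlow'
  -- Since `c < a / 2`, Ekeland moves `z` by less than `d`: `y` stays off `x` and inside the ball.
  have hyz' : dist y z < d := by nlinarith
  have hyx : 0 < dist y x ∧ dist y x < 2 * d := by
    constructor <;> linarith [dist_triangle z y x, dist_triangle y z x, dist_comm y z]
  refine ⟨y, ⟨mem_ball.2 (by linarith), dist_pos.1 hyx.1⟩, hyz.trans hzf,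
    slopeM_le_ofReal ha ((hyz.trans hzf).trans_lt hx.lt_top).ne ?_⟩
  filter_upwards [isOpen_ball.mem_nhds (mem_ball.2 hyx.2)] with u hu
    using hymin u (ball_subset_closedBall hu)

end Slope

/-- Sufficient condition for strict optimality: strict local minimality is equivalent to
strict local minimality relative to an identifiable set. -/
theorem strictLocalMin_iff_strictLocalMin_on_identifiable
    {X : Type*} [MetricSpace X] [CompleteSpace X]
    (f : X → EReal) (hlsc : LowerSemicontinuous f) (hbot : ∀ z, f z ≠ ⊥)
    (xbar : X) (hfin : f xbar ≠ ⊤) (hslope : slopeM f xbar = 0)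
    (M : Set X) (hM : Identifiable f M xbar) :
    (∀ᶠ z in 𝓝[≠] xbar, f xbar < f z) ↔ (∀ᶠ z in 𝓝[M \ {xbar}] xbar, f xbar < f z) := by
  refine ⟨fun h => h.filter_mono (nhdsWithin_mono _ fun _ hy => hy.2), fun hMin => ?_⟩
  obtain ⟨a, ha, hident⟩ := hM.exists_eventually_ofReal_lt_slopeM hlsc
  by_contra hnot
  have hcrit := frequently_le_and_slopeM_le_of_frequently_le hlsc hbot hfin
    (hslope ▸ ENNReal.ofReal_pos.2 (half_pos ha))
    (by simpa only [not_eventually, not_lt] using hnot)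
  have hnear : ∀ᶠ y in 𝓝[≠] xbar, y ≠ xbar ∧ (y ∈ M \ {xbar} → f xbar < f y) ∧
      (y ∉ M → f y ≤ f xbar → ENNReal.ofReal a < slopeM f y) :=
    eventually_mem_nhdsWithin.and
      ((eventually_nhdsWithin_iff.1 hMin).and hident |>.filter_mono nhdsWithin_le_nhds)
  obtain ⟨y, ⟨hyf, hya⟩, hyx, hyMin, hyident⟩ := (hcrit.and_eventually hnear).exists
  by_cases hyM : y ∈ M
  · exact (hyMin ⟨hyM, hyx⟩).not_ge hyf
  · exact (hyident hyM hyf).not_ge hya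
end
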